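/- Let d ≥ 2 and q₁,…,q_d ≥ 2 be integers, and suppose that √(q_i) > Σ_{j≠i} √(q_j) for some index i. Then for every t ∈ ℝ^d one has Q̂(t) ≥ ((√(q_i) − Σ_{j≠i}√(q_j))² − (q₁+⋯+q_d))/D > −1/(d−1); in particular the infimum of Q̂ over ℝ^d is strictly greater than −1/(d−1). -/
import Mathlib

open Finset Real

/-- `Q̂(t) = (1/D)·Σ_{i≠j} √(q_i q_j)·cos(t_i − t_j)`, where `D = (d−1)(q₁+⋯+q_d)`. -/
noncomputable def Qhat (d : ℕ) (q : Fin d → ℕ) (t : Fin d → ℝ) : ℝ :=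
  (1 / (((d : ℝ) - 1) * ∑ j, (q j : ℝ))) *
    ∑ p ∈ Finset.univ.offDiag,
      Real.sqrt ((q p.1 : ℝ) * (q p.2 : ℝ)) * Real.cos (t p.1 - t p.2)

lemma sum_diag_univ {d : ℕ} (f : Fin d × Fin d → ℝ) :
    ∑ p ∈ (Finset.univ : Finset (Fin d)).diag, f p = ∑ j, f (j, j) := by
  refine (Finset.sum_nbij' (fun p => p.1) (fun j => (j, j)) ?_ ?_ ?_ ?_ ?_).symm.symm
  · intro p hp
    exact Finset.mem_univ _
  · intro j hj
    simp [Finset.mem_diag]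
  · intro p hp
    rw [Finset.mem_diag] at hp
    ext <;> simp [hp.2.symm]
  · intro j hj; rfl
  · intro p hp
    rw [Finset.mem_diag] at hp
    obtain ⟨x, y⟩ := p
    have hxy : x = y := hp.2
    subst hxy
    rfl

/-- If `√(q_i) > Σ_{j≠i} √(q_j)` for some `i`, then
`Q̂(t) ≥ ((√(q_i) − Σ_{j≠i}√(q_j))² − (q₁+⋯+q_d))/D > −1/(d−1)` for all `t`; in
particular the infimum of `Q̂` is strictly greater than `−1/(d−1)`. -/
theorem Qhat_lower_bound_of_dominant (d : ℕ) (hd : 2 ≤ d) (q : Fin d → ℕ)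
    (hq : ∀ j, 2 ≤ q j) (i : Fin d)
    (hi : ∑ j ∈ Finset.univ.erase i, Real.sqrt (q j) < Real.sqrt (q i)) :
    (∀ t : Fin d → ℝ,
      ((Real.sqrt (q i) - ∑ j ∈ Finset.univ.erase i, Real.sqrt (q j)) ^ 2
          - ∑ j, (q j : ℝ)) / (((d : ℝ) - 1) * ∑ j, (q j : ℝ)) ≤ Qhat d q t) ∧
    -(1 / ((d : ℝ) - 1)) <
      ((Real.sqrt (q i) - ∑ j ∈ Finset.univ.erase i, Real.sqrt (q j)) ^ 2
          - ∑ j, (q j : ℝ)) / (((d : ℝ) - 1) * ∑ j, (q j : ℝ)) := by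
  set S := ∑ j ∈ Finset.univ.erase i, Real.sqrt (q j) with hS
  set Q := ∑ j, ((q j : ℝ)) with hQ
  set X := Real.sqrt (q i) - S with hXdef
  have hQpos : 0 < Q := by
    rw [hQ]
    refine Finset.sum_pos (fun j _ => ?_) ⟨i, Finset.mem_univ i⟩
    have := hq j
    positivity
  have hdpos : (0:ℝ) < (d:ℝ) - 1 := by
    have : (2:ℝ) ≤ (d:ℝ) := by exact_mod_cast hd
    linarith
  have hDpos : 0 < ((d:ℝ) - 1) * Q := mul_pos hdpos hQpos
  have hXpos : 0 < X := by rw [hXdef]; linarith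
  constructor
  · intro t
    set a := ∑ j, Real.sqrt (q j) * Real.cos (t j) with ha
    set b := ∑ j, Real.sqrt (q j) * Real.sin (t j) with hb
    set T := ∑ p ∈ Finset.univ.offDiag,
      Real.sqrt ((q p.1 : ℝ) * (q p.2 : ℝ)) * Real.cos (t p.1 - t p.2) with hT
    have hsum : a ^ 2 + b ^ 2 = Q + T := by
      have h1 : a ^ 2 + b ^ 2 =
          ∑ p ∈ (Finset.univ : Finset (Fin d)) ×ˢ Finset.univ,
            Real.sqrt ((q p.1 : ℝ) * (q p.2 : ℝ)) * Real.cos (t p.1 - t p.2) := by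
        rw [Finset.sum_product]
        rw [ha, hb, sq, sq, Finset.sum_mul_sum, Finset.sum_mul_sum,
          ← Finset.sum_add_distrib]
        refine Finset.sum_congr rfl fun j _ => ?_
        rw [← Finset.sum_add_distrib]
        refine Finset.sum_congr rfl fun k _ => ?_
        rw [Real.sqrt_mul (by positivity), Real.cos_sub]
        ring
      have h2 : ∑ p ∈ (Finset.univ : Finset (Fin d)) ×ˢ Finset.univ,
            Real.sqrt ((q p.1 : ℝ) * (q p.2 : ℝ)) * Real.cos (t p.1 - t p.2)
          = (∑ p ∈ (Finset.univ : Finset (Fin d)).diag,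
              Real.sqrt ((q p.1 : ℝ) * (q p.2 : ℝ)) * Real.cos (t p.1 - t p.2)) + T := by
        rw [← Finset.diag_union_offDiag (Finset.univ : Finset (Fin d)),
          Finset.sum_union (Finset.disjoint_diag_offDiag _)]
      have h3 : ∑ p ∈ (Finset.univ : Finset (Fin d)).diag,
            Real.sqrt ((q p.1 : ℝ) * (q p.2 : ℝ)) * Real.cos (t p.1 - t p.2) = Q := by
        rw [sum_diag_univ (fun p => Real.sqrt ((q p.1 : ℝ) * (q p.2 : ℝ)) * Real.cos (t p.1 - t p.2))]
        rw [hQ]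
        refine Finset.sum_congr rfl fun j _ => ?_
        simp [Real.sqrt_mul_self (by positivity : (0:ℝ) ≤ (q j : ℝ))]
      rw [h1, h2, h3]
    -- lower bound on a cos(t i) + b sin(t i)
    set c := a * Real.cos (t i) + b * Real.sin (t i) with hc
    have hceq : c = ∑ j, Real.sqrt (q j) * Real.cos (t j - t i) := by
      rw [hc, ha, hb, Finset.sum_mul, Finset.sum_mul, ← Finset.sum_add_distrib]
      refine Finset.sum_congr rfl fun j _ => ?_
      rw [Real.cos_sub]; ring
    have hcge : X ≤ c := by
      rw [hceq, ← Finset.sum_erase_add _ _ (Finset.mem_univ i), sub_self, Real.cos_zero,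
        mul_one, hXdef]
      have : -S ≤ ∑ j ∈ Finset.univ.erase i, Real.sqrt (q j) * Real.cos (t j - t i) := by
        rw [hS, ← Finset.sum_neg_distrib]
        refine Finset.sum_le_sum fun j _ => ?_
        have h1 : (-1 : ℝ) ≤ Real.cos (t j - t i) := Real.neg_one_le_cos _
        nlinarith [Real.sqrt_nonneg ((q j : ℝ))]
      linarith
    have hc2 : X ^ 2 ≤ c ^ 2 := by nlinarith
    have habc : c ^ 2 ≤ a ^ 2 + b ^ 2 := by
      nlinarith [Real.sin_sq_add_cos_sq (t i), sq_nonneg (a * Real.sin (t i) - b * Real.cos (t i))]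
    have hTlb : X ^ 2 - Q ≤ T := by linarith
    have : Qhat d q t = T / (((d:ℝ) - 1) * Q) := by
      rw [Qhat, one_div_mul_eq_div, ← hT, hQ]
    rw [this]
    gcongr
  · rw [lt_div_iff₀ hDpos]
    have hne : ((d:ℝ) - 1) ≠ 0 := ne_of_gt hdpos
    have : -(1 / ((d:ℝ) - 1)) * (((d:ℝ) - 1) * Q) = -Q := by
      field_simp
    rw [this]
    nlinarith [pow_pos hXpos 2]
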